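/- arXiv:2204.02457 — 3 statements merged into one kernel-verified Lean document; each statement's English description precedes it below -/
import Mathlib

section
/- Let N ≥ 1 and let 𝔛 be a non-empty compact metric space. If ℱ is an uncountable family of pairwise disjoint subsets of ℝ^N, each homeomorphic to 𝔛, then there exist a set X₀ ∈ ℱ and a sequence X₁, X₂, … of elements of ℱ with X_i ≠ X₀ (hence X_i ∩ X₀ = ∅) for each i ≥ 1, such that the sequence {X_i, i ∈ ℕ} converges homeomorphically to X₀. -/
/-!
Choosing a parametrization `𝔛 ≃ₜ X` of each `X ∈ F` embeds `F` injectively into the second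
countable metric space `C(𝔛, ℝ^N)` with the uniform metric. An uncountable subset of a second
countable space contains a point that is the limit of a sequence of its other points. If the
parametrizations `φᵢ` converge uniformly to `φ₀`, then `φᵢ ∘ φ₀⁻¹ : X₀ ≃ₜ Xᵢ` moves points by at
most `dist φ₀ φᵢ`.
-/

open Metric Set

/-- A sequence of sets `X 1, X 2, …` in `ℝ^N` converges homeomorphically to `X₀` if for each
`ε > 0` there is `n` such that for every `i ≥ n` there is an `ε`-homeomorphism `X₀ ≅ X i`,
i.e. a homeomorphism moving every point a distance at most `ε`. -/
def ConvergesHomeo {N : ℕ} (X : ℕ → Set (EuclideanSpace ℝ (Fin N)))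
    (X₀ : Set (EuclideanSpace ℝ (Fin N))) : Prop :=
  ∀ ε : ℝ, 0 < ε → ∃ n : ℕ, ∀ i : ℕ, n ≤ i → ∃ h : X₀ ≃ₜ X i,
    ∀ x : X₀, dist (x : EuclideanSpace ℝ (Fin N)) (h x : EuclideanSpace ℝ (Fin N)) ≤ ε

open Filter Topology

def Homeomorph.toContinuousMapVal {𝔛 E : Type*} [TopologicalSpace 𝔛] [TopologicalSpace E]
    {X : Set E} (φ : 𝔛 ≃ₜ X) : C(𝔛, E) :=
  ⟨fun p => (φ p : E), by fun_prop⟩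

lemma Homeomorph.range_toContinuousMapVal {𝔛 E : Type*} [TopologicalSpace 𝔛]
    [TopologicalSpace E] {X : Set E} (φ : 𝔛 ≃ₜ X) : range φ.toContinuousMapVal = X := by
  change range (Subtype.val ∘ φ) = X
  rw [range_comp, φ.surjective.range_eq, image_univ, Subtype.range_coe]

lemma Homeomorph.dist_symm_trans_le {𝔛 E : Type*} [TopologicalSpace 𝔛] [CompactSpace 𝔛]
    [PseudoMetricSpace E] {X Y : Set E} (φ : 𝔛 ≃ₜ X) (ψ : 𝔛 ≃ₜ Y) (x : X) :
    dist (x : E) (φ.symm.trans ψ x : E) ≤ dist φ.toContinuousMapVal ψ.toContinuousMapVal := by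
  obtain ⟨p, rfl⟩ := φ.surjective x
  rw [Homeomorph.trans_apply, Homeomorph.symm_apply_apply]
  exact ContinuousMap.dist_apply_le_dist (f := φ.toContinuousMapVal)
    (g := ψ.toContinuousMapVal) p

lemma convergesHomeo_of_tendsto {N : ℕ} {𝔛 : Type*} [TopologicalSpace 𝔛] [CompactSpace 𝔛]
    {X₀ : Set (EuclideanSpace ℝ (Fin N))} {X : ℕ → Set (EuclideanSpace ℝ (Fin N))}
    (φ₀ : 𝔛 ≃ₜ X₀) (φ : ∀ i, 𝔛 ≃ₜ X i)
    (h : Tendsto (fun i => (φ i).toContinuousMapVal) atTop (𝓝 φ₀.toContinuousMapVal)) :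
    ConvergesHomeo X X₀ := by
  intro ε hε
  obtain ⟨n, hn⟩ := Metric.tendsto_atTop.mp h ε hε
  refine ⟨n, fun i hi => ⟨φ₀.symm.trans (φ i), fun x => ?_⟩⟩
  calc dist (x : EuclideanSpace ℝ (Fin N)) (φ₀.symm.trans (φ i) x) ≤
        dist φ₀.toContinuousMapVal (φ i).toContinuousMapVal := φ₀.dist_symm_trans_le (φ i) x
      _ ≤ ε := by rw [dist_comm]; exact (hn i hi).le

lemma exists_seq_tendsto_of_injective {ι α : Type*} [Uncountable ι] [TopologicalSpace α]
    [SecondCountableTopology α] {f : ι → α} (hf : Function.Injective f) :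
    ∃ i₀ : ι, ∃ i : ℕ → ι, (∀ n, i n ≠ i₀) ∧ Tendsto (f ∘ i) atTop (𝓝 (f i₀)) := by
  have hrange : ¬ (range f).Countable := fun h =>
    have := h.to_subtype
    not_countable (α := ι) (Equiv.ofInjective f hf).injective.countable
  -- a set all of whose points are isolated is discrete, hence countable in a Lindelöf space
  obtain ⟨_, ⟨i₀, rfl⟩, hacc⟩ : ∃ x ∈ range f, AccPt x (𝓟 (range f)) := by
    by_contra! hisol
    have : DiscreteTopology (range f) := discreteTopology_subtype_iff.mpr fun x hx =>
      not_neBot.mp (hisol x hx)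
    exact hrange (countable_coe_iff.mp countable_of_Lindelof_of_discrete)
  rw [accPt_principal_iff_clusterPt, ← mem_closure_iff_clusterPt,
    mem_closure_iff_seq_limit] at hacc
  obtain ⟨u, hu, hlim⟩ := hacc
  choose i hi using fun n => (hu n).1
  refine ⟨i₀, i, fun n h => (hu n).2 ?_, ?_⟩
  · rw [← hi n, h]; rfl
  · simpa only [Function.comp_def, hi] using hlim

theorem stmt0_general {N : ℕ} (𝔛 : Type*) [MetricSpace 𝔛] [CompactSpace 𝔛]
    (F : Set (Set (EuclideanSpace ℝ (Fin N))))
    (hunc : ¬ F.Countable)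
    (hhomeo : ∀ X ∈ F, Nonempty (X ≃ₜ 𝔛)) :
    ∃ X₀ ∈ F, ∃ X : ℕ → Set (EuclideanSpace ℝ (Fin N)),
      (∀ i : ℕ, 1 ≤ i → X i ∈ F) ∧ (∀ i : ℕ, 1 ≤ i → X i ≠ X₀) ∧
      ConvergesHomeo (fun i => X (i + 1)) X₀ := by
  have : Uncountable F := ⟨fun h => hunc (countable_coe_iff.mp h)⟩
  let e (Z : F) : 𝔛 ≃ₜ Z := (hhomeo Z Z.2).some.symm
  have he : Function.Injective fun Z => (e Z).toContinuousMapVal := fun Z W h =>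
    Subtype.ext <| by
      rw [← (e Z).range_toContinuousMapVal, ← (e W).range_toContinuousMapVal]
      exact congrArg (fun f : C(𝔛, EuclideanSpace ℝ (Fin N)) => range f) h
  obtain ⟨Z₀, Z, hne, hlim⟩ := exists_seq_tendsto_of_injective he
  refine ⟨Z₀, Z₀.2, fun i => Z (i - 1), fun i _ => (Z _).2,
    fun i _ h => hne _ (Subtype.ext h), ?_⟩
  simpa only [Nat.add_sub_cancel] using convergesHomeo_of_tendsto (e Z₀) (fun i => e (Z i)) hlim

theorem stmt0 {N : ℕ} (hN : 1 ≤ N) (𝔛 : Type*) [MetricSpace 𝔛] [CompactSpace 𝔛] [Nonempty 𝔛]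
    (F : Set (Set (EuclideanSpace ℝ (Fin N))))
    (hunc : ¬ F.Countable)
    (hdisj : F.Pairwise Disjoint)
    (hhomeo : ∀ X ∈ F, Nonempty (X ≃ₜ 𝔛)) :
    ∃ X₀ ∈ F, ∃ X : ℕ → Set (EuclideanSpace ℝ (Fin N)),
      (∀ i : ℕ, 1 ≤ i → X i ∈ F) ∧ (∀ i : ℕ, 1 ≤ i → X i ≠ X₀) ∧
      ConvergesHomeo (fun i => X (i + 1)) X₀ :=
  stmt0_general 𝔛 F hunc hhomeo
end

section
/- Let N ≥ 1 and let X₀ ⊆ ℝ^N be a compactum. The following are equivalent: (α) there exists a sequence X₁, X₂, … of pairwise disjoint compacta contained in ℝ^N ∖ X₀ such that {X_i, i ∈ ℕ} converges homeomorphically to X₀; (β) for every ε > 0 there exists a topological embedding h_ε : X₀ → ℝ^N such that X₀ ∩ h_ε(X₀) = ∅ and d(x, h_ε(x)) ≤ ε for each x ∈ X₀. -/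
/-!
(α ⇒ β): a far enough term `X_n` of the sequence is the image of an `ε`-homeomorphism, which is
an `ε`-embedding missing `X₀`.

(β ⇒ α): the copies are built one at a time. The union `T` of the finitely many copies built so
far is compact and disjoint from `X₀`, so it keeps a positive distance `δ` from `X₀`; an
`ε`-embedding with `ε < δ` given by (β) lands within `δ` of `X₀` and hence misses `T` as well.
Taking `ε = 1/(n+1)` at step `n` gives homeomorphic convergence.
-/

open Metric Set

open Function Topology

theorem exists_pairwise_disjoint_seq_of_extend {α : Type*} (good : Set α → Prop) (good_empty : good ∅)
    (good_union : ∀ s t, good s → good t → good (s ∪ t)) (P : ℕ → Set α → Prop)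
    (step : ∀ n T, good T → ∃ K, good K ∧ P n K ∧ Disjoint K T) :
    ∃ K : ℕ → Set α, Pairwise (Disjoint on K) ∧ ∀ n, P n (K n) := by
  choose next next_good next_P next_disjoint using step
  -- `built n` is the union of the first `n` sets of the sequence
  let built : ℕ → {T : Set α // good T} := fun n => Nat.rec ⟨∅, good_empty⟩
    (fun n T => ⟨T.1 ∪ next n T.1 T.2, good_union _ _ T.2 (next_good n T.1 T.2)⟩) n
  let K : ℕ → Set α := fun n => next n (built n).1 (built n).2
  have built_succ (n : ℕ) : (built (n + 1)).1 = (built n).1 ∪ K n := rfl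
  have built_mono : Monotone fun n => (built n).1 :=
    monotone_nat_of_le_succ fun n => (built_succ n).symm ▸ subset_union_left
  refine ⟨K, (pairwise_disjoint_on K).2 fun m n hmn => ?_, fun n => next_P n _ _⟩
  have hKm : K m ⊆ (built n).1 :=
    (built_succ m ▸ subset_union_right).trans (built_mono (Nat.succ_le_of_lt hmn))
  exact (next_disjoint n _ _).symm.mono_left hKm

section MetricSpace

variable {α : Type*} [MetricSpace α] {X₀ : Set α}

def HasDisjointSmallEmbeddings (X₀ : Set α) : Prop :=
  ∀ ε : ℝ, 0 < ε → ∃ h : X₀ → α,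
    IsEmbedding h ∧ X₀ ∩ range h = ∅ ∧ ∀ x : X₀, dist (x : α) (h x) ≤ ε

theorem HasDisjointSmallEmbeddings.exists_disjoint_of_isClosed
    (hβ : HasDisjointSmallEmbeddings X₀) (hX₀ : IsCompact X₀)
    {T : Set α} (hT : IsClosed T) (hTX₀ : Disjoint T X₀) {ε : ℝ} (hε : 0 < ε) :
    ∃ h : X₀ → α, IsEmbedding h ∧ X₀ ∩ range h = ∅ ∧ Disjoint (range h) T ∧
      ∀ x : X₀, dist (x : α) (h x) ≤ ε := by
  obtain ⟨δ, hδ, hsep⟩ := hTX₀.symm.exists_thickenings hX₀ hT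
  obtain ⟨h, hemb, hX₀h, hdist⟩ := hβ (min ε (δ / 2)) (by positivity)
  have range_subset : range h ⊆ thickening δ X₀ := by
    rintro _ ⟨x, rfl⟩
    refine mem_thickening_iff.2 ⟨x, x.2, ?_⟩
    rw [dist_comm]
    exact (hdist x).trans_lt ((min_le_right _ _).trans_lt (half_lt_self hδ))
  exact ⟨h, hemb, hX₀h, (hsep.mono_right (self_subset_thickening hδ T)).mono_left range_subset,
    fun x => (hdist x).trans (min_le_left _ _)⟩

theorem HasDisjointSmallEmbeddings.exists_isCompact_homeomorph_disjoint_of_isClosed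
    (hβ : HasDisjointSmallEmbeddings X₀) (hX₀ : IsCompact X₀) (hne : X₀.Nonempty)
    {T : Set α} (hT : IsClosed T) (hTX₀ : Disjoint T X₀) {ε : ℝ} (hε : 0 < ε) :
    ∃ K : Set α, K.Nonempty ∧ IsCompact K ∧ Disjoint K X₀ ∧ Disjoint K T ∧
      ∃ e : X₀ ≃ₜ K, ∀ x : X₀, dist (x : α) (e x) ≤ ε := by
  obtain ⟨h, hemb, hX₀h, hT, hdist⟩ := hβ.exists_disjoint_of_isClosed hX₀ hT hTX₀ hε
  have : CompactSpace X₀ := isCompact_iff_compactSpace.mp hX₀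
  have : Nonempty X₀ := hne.to_subtype
  exact ⟨range h, range_nonempty h, isCompact_range hemb.continuous,
    disjoint_iff_inter_eq_empty.2 (inter_comm X₀ _ ▸ hX₀h), hT, hemb.toHomeomorph, hdist⟩

theorem HasDisjointSmallEmbeddings.exists_pairwise_disjoint_compact_copies
    (hβ : HasDisjointSmallEmbeddings X₀) (hX₀ : IsCompact X₀) (hne : X₀.Nonempty) :
    ∃ X : ℕ → Set α, Pairwise (Disjoint on X) ∧ ∀ n : ℕ,
      (X n).Nonempty ∧ IsCompact (X n) ∧ Disjoint (X n) X₀ ∧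
        ∃ e : X₀ ≃ₜ X n, ∀ x : X₀, dist (x : α) (e x) ≤ 1 / (n + 1) := by
  refine exists_pairwise_disjoint_seq_of_extend (fun T => IsClosed T ∧ Disjoint T X₀)
    ⟨isClosed_empty, empty_disjoint X₀⟩
    (fun s t hs ht => ⟨hs.1.union ht.1, disjoint_union_left.2 ⟨hs.2, ht.2⟩⟩)
    (fun n K => K.Nonempty ∧ IsCompact K ∧ Disjoint K X₀ ∧
      ∃ e : X₀ ≃ₜ K, ∀ x : X₀, dist (x : α) (e x) ≤ 1 / (n + 1))
    fun n T hT => ?_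
  obtain ⟨K, hKne, hK, hKX₀, hKT, he⟩ :=
    hβ.exists_isCompact_homeomorph_disjoint_of_isClosed hX₀ hne hT.1 hT.2
      (Nat.one_div_pos_of_nat (n := n))
  exact ⟨K, ⟨hK.isClosed, hKX₀⟩, ⟨hKne, hK, hKX₀, he⟩, hKT⟩

end MetricSpace

theorem ConvergesHomeo.hasDisjointSmallEmbeddings {N : ℕ} {X : ℕ → Set (EuclideanSpace ℝ (Fin N))}
    {X₀ : Set (EuclideanSpace ℝ (Fin N))} (hconv : ConvergesHomeo X X₀) (hXX₀ : ∀ i, X i ⊆ X₀ᶜ) :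
    HasDisjointSmallEmbeddings X₀ := by
  intro ε hε
  obtain ⟨n, hn⟩ := hconv ε hε
  obtain ⟨e, he⟩ := hn n le_rfl
  refine ⟨fun x => e x, IsEmbedding.subtypeVal.comp e.isEmbedding, ?_, he⟩
  refine eq_empty_of_forall_notMem ?_
  rintro _ ⟨hx, x, rfl⟩
  exact hXX₀ n (e x).2 hx

theorem convergesHomeo_of_forall_homeomorph_dist_le {N : ℕ}
    {X : ℕ → Set (EuclideanSpace ℝ (Fin N))} {X₀ : Set (EuclideanSpace ℝ (Fin N))}
    (hX : ∀ n, ∃ e : X₀ ≃ₜ X n, ∀ x : X₀,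
      dist (x : EuclideanSpace ℝ (Fin N)) (e x : EuclideanSpace ℝ (Fin N)) ≤ 1 / (n + 1)) :
    ConvergesHomeo X X₀ := by
  intro ε hε
  obtain ⟨n, hn⟩ := exists_nat_one_div_lt hε
  refine ⟨n, fun i hi => ?_⟩
  obtain ⟨e, he⟩ := hX i
  have : (1 : ℝ) / (i + 1) ≤ 1 / (n + 1) := by gcongr
  exact ⟨e, fun x => (he x).trans (this.trans hn.le)⟩

theorem stmt4_general {N : ℕ}
    (X₀ : Set (EuclideanSpace ℝ (Fin N))) (hne : X₀.Nonempty) (hcpt : IsCompact X₀) :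
    (∃ X : ℕ → Set (EuclideanSpace ℝ (Fin N)),
      (∀ i : ℕ, (X i).Nonempty ∧ IsCompact (X i)) ∧
      (∀ i : ℕ, X i ⊆ X₀ᶜ) ∧
      (∀ i j : ℕ, i ≠ j → Disjoint (X i) (X j)) ∧
      ConvergesHomeo X X₀)
    ↔
    (∀ ε : ℝ, 0 < ε → ∃ h : X₀ → EuclideanSpace ℝ (Fin N),
      Topology.IsEmbedding h ∧ X₀ ∩ Set.range h = ∅ ∧
      ∀ x : X₀, dist (x : EuclideanSpace ℝ (Fin N)) (h x) ≤ ε) := by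
  constructor
  · rintro ⟨X, -, hXX₀, -, hconv⟩
    exact hconv.hasDisjointSmallEmbeddings hXX₀
  · intro hβ
    obtain ⟨X, hdisj, hX⟩ :=
      HasDisjointSmallEmbeddings.exists_pairwise_disjoint_compact_copies hβ hcpt hne
    exact ⟨X, fun i => ⟨(hX i).1, (hX i).2.1⟩,
      fun i => subset_compl_iff_disjoint_right.2 (hX i).2.2.1, fun _ _ => (hdisj ·),
      convergesHomeo_of_forall_homeomorph_dist_le fun n => (hX n).2.2.2⟩

theorem stmt4 {N : ℕ} (hN : 1 ≤ N)
    (X₀ : Set (EuclideanSpace ℝ (Fin N))) (hne : X₀.Nonempty) (hcpt : IsCompact X₀) :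
    (∃ X : ℕ → Set (EuclideanSpace ℝ (Fin N)),
      (∀ i : ℕ, (X i).Nonempty ∧ IsCompact (X i)) ∧
      (∀ i : ℕ, X i ⊆ X₀ᶜ) ∧
      (∀ i j : ℕ, i ≠ j → Disjoint (X i) (X j)) ∧
      ConvergesHomeo X X₀)
    ↔
    (∀ ε : ℝ, 0 < ε → ∃ h : X₀ → EuclideanSpace ℝ (Fin N),
      Topology.IsEmbedding h ∧ X₀ ∩ Set.range h = ∅ ∧
      ∀ x : X₀, dist (x : EuclideanSpace ℝ (Fin N)) (h x) ≤ ε) :=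
  stmt4_general X₀ hne hcpt
end

section
/- Let N ≥ 4. Set W = [−1,1]^{N−1} × [−2,0] ⊆ ℝ^N, Q = [−1/2,1/2]^{N−1} × [0,1], and P = W ∩ Q. Let F : W → ℝ^N be a topological embedding such that F(x) = x for all x ∈ ∂W ∖ P and F(P) ⊆ Q, and put Σ = F(∂W). Then for each ε > 0 there exists an ε-homeomorphism ψ_ε of ∂W onto a subset of ℝ^N such that ψ_ε(∂W) ⊆ Ext(∂W) and (ℝ^N, ψ_ε(∂W)) ≅ (ℝ^N, Σ). -/
open Metric Set

/-- The box `W = [-1,1]^{N-1} × [-2,0]` in `ℝ^N` (the last coordinate is the distinguished one). -/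
def cubeW (N : ℕ) : Set (EuclideanSpace ℝ (Fin N)) :=
  WithLp.ofLp ⁻¹' Set.univ.pi fun i : Fin N => if (i : ℕ) = N - 1 then Set.Icc (-2 : ℝ) 0 else Set.Icc (-1) 1

/-- The box `Q = [-1/2,1/2]^{N-1} × [0,1]` in `ℝ^N`. -/
def cubeQ (N : ℕ) : Set (EuclideanSpace ℝ (Fin N)) :=
  WithLp.ofLp ⁻¹' Set.univ.pi fun i : Fin N =>
    if (i : ℕ) = N - 1 then Set.Icc (0 : ℝ) 1 else Set.Icc (-(1/2)) (1/2)

/-- `P = W ∩ Q`. -/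
def cubeP (N : ℕ) : Set (EuclideanSpace ℝ (Fin N)) := cubeW N ∩ cubeQ N

/-- The interior domain `Int S` of an `(N-1)`-sphere `S ⊆ ℝ^N`: the points of the complement
whose connected component in the complement is bounded. -/
def sphereInt {N : ℕ} (S : Set (EuclideanSpace ℝ (Fin N))) : Set (EuclideanSpace ℝ (Fin N)) :=
  {x | x ∉ S ∧ Bornology.IsBounded (connectedComponentIn Sᶜ x)}

/-- The exterior domain `Ext S` of an `(N-1)`-sphere `S ⊆ ℝ^N`: the points of the complement
whose connected component in the complement is unbounded. -/
def sphereExt {N : ℕ} (S : Set (EuclideanSpace ℝ (Fin N))) : Set (EuclideanSpace ℝ (Fin N)) :=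
  {x | x ∉ S ∧ ¬ Bornology.IsBounded (connectedComponentIn Sᶜ x)}

/-- `(ℝ^N, X) ≅ (ℝ^N, Y)`: some self-homeomorphism of `ℝ^N` carries `X` onto `Y`. -/
def AmbHomeo {N : ℕ} (X Y : Set (EuclideanSpace ℝ (Fin N))) : Prop :=
  ∃ h : (EuclideanSpace ℝ (Fin N)) ≃ₜ (EuclideanSpace ℝ (Fin N)), h '' X = Y

/-!
In coordinates centred at the centre of `W`, with the distinguished coordinate `s` first and the
sup norm, `W` is the closed unit ball, `∂W` the unit sphere and `P` lies in the top face `s = 1`.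
The homeomorphism `ρ` keeps `s` and the norm and enlarges the slopes `‖h‖ / s` inside the cone over
the top face, so that it blows a small cap of that face up over `P`; its inverse squeezes `Q` into
a thin box above the cap. Let `Ψ` be `ρ⁻¹` followed by a small radial push, which maps the sphere
of radius `r ≥ 1` to the sphere of radius `1 + t r`. Then `ψ = Ψ ∘ F ∘ ρ` is the push itself where
`F` is the identity and keeps the cap inside a thin box above it elsewhere, so `ψ` is `ε`-close to
the inclusion of `∂W` and lands outside `W`, while `Ψ⁻¹` carries its image onto `Σ = F(∂W)`.
-/

open Filter Topology

lemma not_isBounded_connectedComponentIn_of_ray {V : Type*} [NormedAddCommGroup V]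
    [NormedSpace ℝ V] {S : Set V} {w v : V} (hv : v ≠ 0)
    (hray : ∀ τ : ℝ, 0 ≤ τ → w + τ • v ∉ S) :
    ¬ Bornology.IsBounded (connectedComponentIn Sᶜ w) := by
  intro hbdd
  have hsub : (fun τ : ℝ => w + τ • v) '' Ici 0 ⊆ connectedComponentIn Sᶜ w :=
    (isPreconnected_Ici.image _ (by fun_prop : Continuous fun τ : ℝ => w + τ • v).continuousOn
      ).subset_connectedComponentIn ⟨0, self_mem_Ici, by simp⟩
      (by rintro _ ⟨τ, hτ, rfl⟩; exact hray τ hτ)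
  obtain ⟨C, hC⟩ := (hbdd.subset hsub).exists_norm_le
  have hv' : 0 < ‖v‖ := norm_pos_iff.2 hv
  set τ := (|C| + ‖w‖ + 1) / ‖v‖
  have hτ : 0 ≤ τ := by positivity
  have hfar : ‖τ • v‖ = |C| + ‖w‖ + 1 := by
    rw [norm_smul, Real.norm_of_nonneg hτ, div_mul_cancel₀ _ hv'.ne']
  have hC' : ‖w + τ • v‖ ≤ C := hC _ ⟨τ, hτ, rfl⟩
  have := norm_sub_le (w + τ • v) w
  rw [add_sub_cancel_left, hfar] at this
  linarith [le_abs_self C]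

lemma isEmbedding_homeomorph_comp_restrict {X : Type*} [TopologicalSpace X] {S W : Set X}
    {F : X → X} (ρ Ψ : X ≃ₜ X) (hρ : MapsTo ρ S W)
    (hF : Topology.IsEmbedding fun x : W => F x) :
    Topology.IsEmbedding fun x : S => Ψ (F (ρ x)) :=
  Ψ.isEmbedding.comp (hF.comp ((ρ.isEmbedding.comp .subtypeVal).codRestrict W fun x => hρ x.2))

lemma ambHomeo_range_homeomorph_comp {N : ℕ} {S : Set (EuclideanSpace ℝ (Fin N))}
    {F : EuclideanSpace ℝ (Fin N) → EuclideanSpace ℝ (Fin N)}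
    (ρ Ψ : EuclideanSpace ℝ (Fin N) ≃ₜ EuclideanSpace ℝ (Fin N)) (hρ : ρ '' S = S) :
    AmbHomeo (range fun x : S => Ψ (F (ρ x))) (F '' S) := by
  refine ⟨Ψ.symm, ?_⟩
  rw [show (range fun x : S => Ψ (F (ρ x))) = Ψ '' (F '' (ρ '' S)) by ext; simp, hρ,
    Ψ.image_symm, Ψ.preimage_image]

section RadialPush

variable {V : Type*} [NormedAddCommGroup V] [NormedSpace ℝ V] {t : ℝ}

/-- Multiplies `‖u‖` by `1 + t` inside the unit ball and sends the sphere of radius `m ≥ 1` to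
the sphere of radius `1 + t * m`. -/
noncomputable def radialPush (t : ℝ) (u : V) : V := (t + (max ‖u‖ 1)⁻¹) • u

noncomputable def radialPull (t : ℝ) (v : V) : V := (t + (max ((‖v‖ - 1) / t) 1)⁻¹)⁻¹ • v

lemma add_inv_max_one_pos (ht : 0 ≤ t) (a : ℝ) : 0 < t + (max a 1)⁻¹ := by
  have : 0 < (max a 1)⁻¹ := inv_pos.2 (lt_max_of_lt_right one_pos)
  linarith

lemma norm_radialPush (ht : 0 ≤ t) (u : V) :
    ‖radialPush t u‖ = (t + (max ‖u‖ 1)⁻¹) * ‖u‖ := by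
  rw [radialPush, norm_smul, Real.norm_of_nonneg (add_inv_max_one_pos ht _).le]

lemma max_norm_radialPush (ht : 0 < t) (u : V) :
    max ((‖radialPush t u‖ - 1) / t) 1 = max ‖u‖ 1 := by
  rw [norm_radialPush ht.le]
  rcases le_total ‖u‖ 1 with hu | hu
  · rw [max_eq_right hu, inv_one, max_eq_right]
    rw [div_le_one ht]
    nlinarith
  · rw [max_eq_left hu, add_mul, inv_mul_cancel₀ (by linarith), add_sub_cancel_right,
      mul_div_cancel_left₀ _ ht.ne', max_eq_left hu]

lemma max_norm_radialPull (ht : 0 < t) (v : V) :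
    max ‖radialPull t v‖ 1 = max ((‖v‖ - 1) / t) 1 := by
  have hpos := add_inv_max_one_pos ht.le ((‖v‖ - 1) / t)
  rw [radialPull, norm_smul, Real.norm_of_nonneg (inv_pos.2 hpos).le]
  rcases le_total ((‖v‖ - 1) / t) 1 with hv | hv
  · rw [max_eq_right hv, inv_one, max_eq_right]
    rw [div_le_one ht] at hv
    rw [inv_mul_le_iff₀ (by linarith)]
    linarith
  · rw [max_eq_left hv]
    have hv' : 1 + t ≤ ‖v‖ := by rw [le_div_iff₀ ht] at hv; linarith
    have key : (t + ((‖v‖ - 1) / t)⁻¹)⁻¹ * ‖v‖ = (‖v‖ - 1) / t := by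
      have ha : ‖v‖ - 1 ≠ 0 := by linarith
      have hv0 : ‖v‖ ≠ 0 := by linarith
      rw [inv_div, show t + t / (‖v‖ - 1) = t * ‖v‖ / (‖v‖ - 1) by field_simp; ring]
      field_simp
    rw [key, max_eq_left hv]

lemma radialPull_radialPush (ht : 0 < t) (u : V) : radialPull t (radialPush t u) = u := by
  rw [radialPull, max_norm_radialPush ht, radialPush, smul_smul,
    inv_mul_cancel₀ (add_inv_max_one_pos ht.le _).ne', one_smul]

lemma radialPush_radialPull (ht : 0 < t) (v : V) : radialPush t (radialPull t v) = v := by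
  rw [radialPush, max_norm_radialPull ht, radialPull, smul_smul,
    mul_inv_cancel₀ (add_inv_max_one_pos ht.le _).ne', one_smul]

noncomputable def radialPushHomeomorph (t : ℝ) (ht : 0 < t) : V ≃ₜ V where
  toFun := radialPush t
  invFun := radialPull t
  left_inv := radialPull_radialPush ht
  right_inv := radialPush_radialPull ht
  continuous_toFun := by
    refine Continuous.smul ?_ continuous_id
    exact continuous_const.add ((continuous_norm.max continuous_const).inv₀
      fun u => (lt_max_of_lt_right one_pos).ne')
  continuous_invFun := by
    refine Continuous.smul ?_ continuous_id
    refine Continuous.inv₀ ?_ fun v => (add_inv_max_one_pos ht.le _).ne'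
    exact continuous_const.add ((((continuous_norm.sub continuous_const).div_const t).max
      continuous_const).inv₀ fun u => (lt_max_of_lt_right one_pos).ne')

lemma radialPush_of_norm_le_one {u : V} (hu : ‖u‖ ≤ 1) : radialPush t u = (t + 1) • u := by
  rw [radialPush, max_eq_right hu, inv_one]

end RadialPush

section ConeMap

variable {E : Type*} [NormedAddCommGroup E] {b σ : ℝ}

/-- For `u = (s, h)` in the cone `‖h‖ < s` this is the slope `‖h‖ / s ∈ [0, 1)`; outside the cone
it is `1`, except that `0 / 0 = 0` on the half-axis `h = 0, s ≤ 0`. -/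
noncomputable def coneSlope (u : ℝ × E) : ℝ := ‖u.2‖ / max u.1 ‖u.2‖

/-- `coneFactor b σ * σ = σ / (b + (1 - b) σ)` is a self-homeomorphism of `[0, 1]` fixing both
ends, with inverse given by the parameter `b⁻¹`. -/
noncomputable def coneFactor (b σ : ℝ) : ℝ := (b + (1 - b) * σ)⁻¹

lemma continuousAt_coneSlope {u : ℝ × E} (h : 0 < max u.1 ‖u.2‖) :
    ContinuousAt coneSlope u :=
  (continuous_snd.norm.continuousAt).div
    (continuous_fst.max continuous_snd.norm).continuousAt h.ne'

lemma coneSlope_nonneg (u : ℝ × E) : 0 ≤ coneSlope u :=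
  div_nonneg (norm_nonneg _) ((norm_nonneg _).trans (le_max_right _ _))

lemma coneSlope_le_one (u : ℝ × E) : coneSlope u ≤ 1 :=
  div_le_one_of_le₀ (le_max_right _ _) ((norm_nonneg _).trans (le_max_right _ _))

lemma coneSlope_of_lt {u : ℝ × E} (h : ‖u.2‖ < u.1) : coneSlope u = ‖u.2‖ / u.1 := by
  rw [coneSlope, max_eq_left h.le]

lemma coneFactor_denom_pos (hb : 0 < b) (h0 : 0 ≤ σ) (h1 : σ ≤ 1) : 0 < b + (1 - b) * σ := by
  rcases h0.eq_or_lt with rfl | h0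
  · simpa using hb
  · nlinarith

lemma coneFactor_pos (hb : 0 < b) (h0 : 0 ≤ σ) (h1 : σ ≤ 1) : 0 < coneFactor b σ :=
  inv_pos.2 (coneFactor_denom_pos hb h0 h1)

lemma coneFactor_le (hb : 0 < b) (h0 : 0 ≤ σ) (h1 : σ ≤ 1) : coneFactor b σ ≤ (min b 1)⁻¹ := by
  refine inv_anti₀ (lt_min hb one_pos) ?_
  rcases le_total b 1 with h | h
  · rw [min_eq_left h]; nlinarith
  · rw [min_eq_right h]; nlinarith

lemma coneFactor_one : coneFactor b 1 = 1 := by simp [coneFactor]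

lemma coneFactor_mul_lt_one (hb : 0 < b) (h0 : 0 ≤ σ) (h1 : σ < 1) : coneFactor b σ * σ < 1 := by
  rw [coneFactor, inv_mul_lt_iff₀ (coneFactor_denom_pos hb h0 h1.le)]
  nlinarith

lemma coneFactor_mul_le (hb : 0 < b) (h0 : 0 ≤ σ) (h : σ ≤ 1 / 2) :
    coneFactor b σ * σ ≤ (1 + b)⁻¹ := by
  rw [coneFactor, inv_mul_le_iff₀ (coneFactor_denom_pos hb h0 (by linarith)),
    ← div_eq_mul_inv, le_div_iff₀ (by linarith)]
  nlinarith

lemma coneFactor_coneFactor_inv (hb : 0 < b) (h0 : 0 ≤ σ) (h1 : σ ≤ 1) :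
    coneFactor b (coneFactor b⁻¹ σ * σ) * coneFactor b⁻¹ σ = 1 := by
  have hd : 0 < 1 + (b - 1) * σ := by nlinarith [mul_nonneg hb.le h0]
  have hinv : coneFactor b⁻¹ σ = b / (1 + (b - 1) * σ) := by
    rw [coneFactor]; field_simp
  rw [hinv, coneFactor]
  field_simp
  ring

variable [NormedSpace ℝ E]

noncomputable def coneMap (b : ℝ) (u : ℝ × E) : ℝ × E :=
  (u.1, coneFactor b (coneSlope u) • u.2)

lemma coneMap_of_le {u : ℝ × E} (h : u.1 ≤ ‖u.2‖) : coneMap b u = u := by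
  rcases eq_or_ne u.2 0 with h0 | h0
  · exact Prod.ext rfl (by simp [coneMap, h0])
  · have : coneSlope u = 1 := by
      rw [coneSlope, max_eq_right h, div_self (norm_ne_zero_iff.2 h0)]
    simp [coneMap, this, coneFactor_one]

lemma norm_snd_coneMap (hb : 0 < b) (u : ℝ × E) :
    ‖(coneMap b u).2‖ = coneFactor b (coneSlope u) * ‖u.2‖ := by
  rw [coneMap, norm_smul,
    Real.norm_of_nonneg (coneFactor_pos hb (coneSlope_nonneg u) (coneSlope_le_one u)).le]

lemma norm_snd_coneMap_of_lt (hb : 0 < b) {u : ℝ × E} (h : ‖u.2‖ < u.1) :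
    ‖(coneMap b u).2‖ = coneFactor b (coneSlope u) * coneSlope u * u.1 := by
  rw [norm_snd_coneMap hb, coneSlope_of_lt h, mul_assoc, div_mul_cancel₀]
  exact ((norm_nonneg _).trans_lt h).ne'

lemma norm_snd_coneMap_lt (hb : 0 < b) {u : ℝ × E} (h : ‖u.2‖ < u.1) :
    ‖(coneMap b u).2‖ < u.1 := by
  have hs : 0 < u.1 := (norm_nonneg _).trans_lt h
  have hσ : coneSlope u < 1 := by rw [coneSlope_of_lt h]; exact (div_lt_one hs).2 h
  rw [norm_snd_coneMap_of_lt hb h]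
  nlinarith [coneFactor_mul_lt_one hb (coneSlope_nonneg u) hσ]

lemma norm_coneMap (hb : 0 < b) (u : ℝ × E) : ‖coneMap b u‖ = ‖u‖ := by
  rcases le_or_gt u.1 ‖u.2‖ with h | h
  · rw [coneMap_of_le h]
  · have hs : 0 < u.1 := (norm_nonneg _).trans_lt h
    rw [Prod.norm_def, Prod.norm_def, show (coneMap b u).1 = u.1 from rfl,
      Real.norm_of_nonneg hs.le, max_eq_left h.le, max_eq_left (norm_snd_coneMap_lt hb h).le]

lemma coneMap_coneMap_inv (hb : 0 < b) (u : ℝ × E) : coneMap b (coneMap b⁻¹ u) = u := by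
  rcases le_or_gt u.1 ‖u.2‖ with h | h
  · rw [coneMap_of_le h, coneMap_of_le h]
  · have hb' : 0 < b⁻¹ := inv_pos.2 hb
    have h' : ‖(coneMap b⁻¹ u).2‖ < (coneMap b⁻¹ u).1 := norm_snd_coneMap_lt hb' h
    have hslope : coneSlope (coneMap b⁻¹ u) = coneFactor b⁻¹ (coneSlope u) * coneSlope u := by
      rw [coneSlope_of_lt h', norm_snd_coneMap_of_lt hb' h]
      exact mul_div_cancel_right₀ _ ((norm_nonneg _).trans_lt h).ne'
    refine Prod.ext rfl ?_
    change coneFactor b (coneSlope (coneMap b⁻¹ u)) • coneFactor b⁻¹ (coneSlope u) • u.2 = u.2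
    rw [hslope, smul_smul, coneFactor_coneFactor_inv hb (coneSlope_nonneg u) (coneSlope_le_one u),
      one_smul]

lemma continuous_coneMap (hb : 0 < b) : Continuous (coneMap (E := E) b) := by
  refine continuous_fst.prodMk (continuous_iff_continuousAt.2 fun u => ?_)
  rcases lt_or_ge 0 (max u.1 ‖u.2‖) with h | h
  · refine ContinuousAt.smul ?_ continuous_snd.continuousAt
    refine ((continuousAt_const.add (continuousAt_const.mul
      (continuousAt_coneSlope h))).inv₀ ?_)
    exact (coneFactor_denom_pos hb (coneSlope_nonneg u) (coneSlope_le_one u)).ne'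
  · -- on the half-axis `h = 0, s ≤ 0` the factor jumps, but it stays bounded while `h → 0`
    have hu : u.2 = 0 := norm_eq_zero.1 (le_antisymm ((le_max_right _ _).trans h) (norm_nonneg _))
    have hbdd : IsBoundedUnder (· ≤ ·) (𝓝 u) (norm ∘ fun v : ℝ × E => coneFactor b (coneSlope v)) :=
      isBoundedUnder_of ⟨(min b 1)⁻¹, fun v => by
        have h0 := coneSlope_nonneg v
        have h1 := coneSlope_le_one v
        simpa [Real.norm_of_nonneg (coneFactor_pos hb h0 h1).le] using coneFactor_le hb h0 h1⟩
    have := hbdd.smul_tendsto_zero (hu ▸ continuous_snd.continuousAt : Tendsto Prod.snd (𝓝 u) (𝓝 0))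
    simpa [ContinuousAt, hu] using this

noncomputable def coneHomeomorph (b : ℝ) (hb : 0 < b) : (ℝ × E) ≃ₜ (ℝ × E) where
  toFun := coneMap b
  invFun := coneMap b⁻¹
  left_inv u := by simpa using coneMap_coneMap_inv (inv_pos.2 hb) u
  right_inv := coneMap_coneMap_inv hb
  continuous_toFun := continuous_coneMap hb
  continuous_invFun := continuous_coneMap (inv_pos.2 hb)

lemma coneMap_image_sphere (hb : 0 < b) (r : ℝ) :
    coneMap b '' sphere (0 : ℝ × E) r = sphere 0 r := by
  ext u
  constructor
  · rintro ⟨v, hv, rfl⟩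
    simpa [norm_coneMap hb] using hv
  · intro hu
    refine ⟨coneMap b⁻¹ u, ?_, coneMap_coneMap_inv hb u⟩
    simpa [norm_coneMap (inv_pos.2 hb)] using hu

end ConeMap

section PushOff

variable {E : Type*} [NormedAddCommGroup E] [NormedSpace ℝ E]

/-- `Q`, read in the coordinates `cubeChart`. -/
def boxQ (E : Type*) [NormedAddCommGroup E] : Set (ℝ × E) := Icc 1 2 ×ˢ closedBall 0 (1 / 2)

lemma coneMap_mapsTo_boxQ {b : ℝ} (hb : 0 < b) :
    MapsTo (coneMap b) (boxQ E) (Icc 1 2 ×ˢ closedBall 0 (2 / (1 + b))) := by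
  rintro ⟨s, h⟩ ⟨hs, hh⟩
  rw [mem_closedBall_zero_iff] at hh
  refine ⟨hs, ?_⟩
  have hlt : ‖h‖ < s := by linarith [hs.1]
  have hσ : coneSlope (s, h) ≤ 1 / 2 := by
    rw [coneSlope_of_lt hlt, div_le_iff₀ (by linarith [hs.1])]; linarith [hs.1]
  rw [mem_closedBall_zero_iff, norm_snd_coneMap_of_lt hb hlt]
  calc coneFactor b (coneSlope (s, h)) * coneSlope (s, h) * s ≤ (1 + b)⁻¹ * 2 :=
        mul_le_mul (coneFactor_mul_le hb (coneSlope_nonneg _) hσ) hs.2 (by linarith [hs.1])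
          (by positivity)
    _ = 2 / (1 + b) := by ring

lemma radialPush_mapsTo_box {t r : ℝ} (ht : 0 ≤ t) (hr : r ≤ 1) :
    MapsTo (radialPush t) (Icc 1 2 ×ˢ closedBall (0 : E) r)
      (Icc (1 + t) (1 + 2 * t) ×ˢ closedBall 0 ((t + 1) * r)) := by
  rintro ⟨s, h⟩ ⟨hs, hh⟩
  rw [mem_closedBall_zero_iff] at hh
  have hs0 : 0 < s := by linarith [hs.1]
  have hnorm : max ‖(s, h)‖ 1 = s := by
    have hhs : ‖h‖ ≤ s := hh.trans (hr.trans hs.1)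
    rw [Prod.norm_mk, Real.norm_of_nonneg hs0.le, max_eq_left hhs, max_eq_left hs.1]
  refine ⟨⟨?_, ?_⟩, ?_⟩ <;>
    simp only [radialPush, hnorm, Prod.smul_mk, smul_eq_mul, mem_closedBall_zero_iff]
  · rw [add_mul, inv_mul_cancel₀ hs0.ne']; nlinarith [hs.1]
  · rw [add_mul, inv_mul_cancel₀ hs0.ne']; nlinarith [hs.2]
  · rw [norm_smul, Real.norm_of_nonneg (by positivity)]
    have : s⁻¹ ≤ 1 := inv_le_one_of_one_le₀ hs.1
    exact mul_le_mul (by linarith) hh (norm_nonneg _) (by linarith)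

lemma pushOff_bounds {f : ℝ × E → ℝ × E}
    (hfix : ∀ u ∈ sphere (0 : ℝ × E) 1 \ boxQ E, f u = u)
    (hQ : ∀ u ∈ sphere (0 : ℝ × E) 1 ∩ boxQ E, f u ∈ boxQ E) {b t : ℝ} (hb : 1 ≤ b) (ht : 0 < t)
    {u : ℝ × E} (hu : u ∈ sphere 0 1) :
    dist u (radialPush t (coneMap b (f (coneMap b⁻¹ u)))) ≤ max (2 * t) ((t + 2) * (2 / (1 + b))) ∧
      1 < ‖radialPush t (coneMap b (f (coneMap b⁻¹ u)))‖ := by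
  have hb0 : 0 < b := by linarith
  have hr : 2 / (1 + b) ≤ 1 := by rw [div_le_one (by linarith)]; linarith
  have hu1 : ‖u‖ = 1 := mem_sphere_zero_iff_norm.1 hu
  have hρu : coneMap b⁻¹ u ∈ sphere (0 : ℝ × E) 1 := by
    rw [← coneMap_image_sphere (inv_pos.2 hb0)]; exact mem_image_of_mem _ hu
  by_cases hq : coneMap b⁻¹ u ∈ boxQ E
  · have hu' : u ∈ Icc 1 2 ×ˢ closedBall 0 (2 / (1 + b)) := by
      rw [← coneMap_coneMap_inv hb0 u]; exact coneMap_mapsTo_boxQ hb0 hq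
    have hw := radialPush_mapsTo_box ht.le hr (coneMap_mapsTo_boxQ hb0 (hQ _ ⟨hρu, hq⟩))
    set w := radialPush t (coneMap b (f (coneMap b⁻¹ u)))
    have hu₁ : u.1 = 1 := le_antisymm (hu1 ▸ (le_abs_self _).trans (norm_fst_le u)) hu'.1.1
    rw [mem_prod, mem_Icc, mem_closedBall_zero_iff] at hw hu'
    refine ⟨?_, ?_⟩
    · rw [Prod.dist_eq, Real.dist_eq, hu₁]
      refine max_le_max (by rw [abs_le]; constructor <;> linarith) ?_
      calc dist u.2 w.2 ≤ ‖u.2‖ + ‖w.2‖ := dist_le_norm_add_norm _ _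
        _ ≤ 2 / (1 + b) + (t + 1) * (2 / (1 + b)) := add_le_add hu'.2 hw.2
        _ = (t + 2) * (2 / (1 + b)) := by ring
    · calc 1 < 1 + t := by linarith
        _ ≤ w.1 := hw.1.1
        _ ≤ ‖w‖ := (le_abs_self _).trans (norm_fst_le w)
  · rw [hfix _ ⟨hρu, hq⟩, coneMap_coneMap_inv hb0, radialPush_of_norm_le_one hu1.le]
    refine ⟨?_, ?_⟩
    · rw [dist_eq_norm, show u - (t + 1) • u = -(t • u) by module, norm_neg, norm_smul, hu1,
        mul_one, Real.norm_of_nonneg ht.le]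
      exact le_max_of_le_left (by linarith)
    · rw [norm_smul, hu1, mul_one, Real.norm_of_nonneg (by linarith)]
      linarith

theorem exists_homeomorph_pushOff_sphere {f : ℝ × E → ℝ × E}
    (hfix : ∀ u ∈ sphere (0 : ℝ × E) 1 \ boxQ E, f u = u)
    (hQ : ∀ u ∈ sphere (0 : ℝ × E) 1 ∩ boxQ E, f u ∈ boxQ E) {δ : ℝ} (hδ : 0 < δ) :
    ∃ ρ Ψ : (ℝ × E) ≃ₜ (ℝ × E), ρ '' sphere 0 1 = sphere 0 1 ∧
      ∀ u ∈ sphere (0 : ℝ × E) 1, dist u (Ψ (f (ρ u))) ≤ δ ∧ 1 < ‖Ψ (f (ρ u))‖ := by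
  obtain ⟨b, hb, hbδ⟩ : ∃ b : ℝ, 1 ≤ b ∧ (δ / 2 + 2) * (2 / (1 + b)) ≤ δ := by
    refine ⟨4 / δ + 1, le_add_of_nonneg_left (by positivity), ?_⟩
    rw [mul_div_assoc', div_le_iff₀ (by positivity)]
    field_simp
    nlinarith
  have ht : 0 < δ / 2 := by positivity
  refine ⟨coneHomeomorph b⁻¹ (by positivity), (coneHomeomorph b (by linarith)).trans
    (radialPushHomeomorph (δ / 2) ht), coneMap_image_sphere (by positivity) 1, fun u hu => ?_⟩
  obtain ⟨hd, hn⟩ := pushOff_bounds hfix hQ hb ht hu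
  exact ⟨hd.trans (max_le (by linarith) hbδ), hn⟩

end PushOff

section Cube

variable {m : ℕ}

noncomputable def splitLast (m : ℕ) : EuclideanSpace ℝ (Fin (m + 1)) ≃L[ℝ] ℝ × (Fin m → ℝ) :=
  LinearEquiv.toContinuousLinearEquiv
    { toFun x := (x (Fin.last m), fun i => x i.castSucc)
      invFun p := WithLp.toLp 2 (Fin.snoc p.2 p.1)
      map_add' _ _ := rfl
      map_smul' _ _ := rfl
      left_inv x := congrArg (WithLp.toLp 2) (Fin.snoc_init_self (α := fun _ => ℝ) x.ofLp)
      right_inv p := by simp }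

@[simp] lemma splitLast_apply (x : EuclideanSpace ℝ (Fin (m + 1))) :
    splitLast m x = (x (Fin.last m), fun i => x i.castSucc) := rfl

noncomputable def cubeChart (m : ℕ) : EuclideanSpace ℝ (Fin (m + 1)) ≃ₜ ℝ × (Fin m → ℝ) :=
  (Homeomorph.subRight ((splitLast m).symm (-1, 0))).trans (splitLast m).toHomeomorph

lemma cubeChart_apply (x : EuclideanSpace ℝ (Fin (m + 1))) :
    cubeChart m x = (x (Fin.last m) + 1, fun i => x i.castSucc) := by
  change splitLast m (x - (splitLast m).symm (-1, 0)) = _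
  rw [map_sub, ContinuousLinearEquiv.apply_symm_apply]
  ext <;> simp

lemma mem_pi_ite_last_iff {A B : Set ℝ} (x : EuclideanSpace ℝ (Fin (m + 1))) :
    x ∈ WithLp.ofLp ⁻¹' univ.pi (fun i : Fin (m + 1) => if (i : ℕ) = m + 1 - 1 then A else B) ↔
      x (Fin.last m) ∈ A ∧ ∀ i : Fin m, x i.castSucc ∈ B := by
  have hne (i : Fin m) : (i : ℕ) ≠ m := i.isLt.ne
  simp [Fin.forall_fin_succ', and_comm, hne]

lemma cubeW_eq_preimage : cubeW (m + 1) = cubeChart m ⁻¹' closedBall 0 1 := by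
  ext x
  rw [cubeW, mem_pi_ite_last_iff, mem_preimage, cubeChart_apply, mem_closedBall_zero_iff,
    Prod.norm_mk, max_le_iff, pi_norm_le_iff_of_nonneg zero_le_one]
  simp only [mem_Icc, Real.norm_eq_abs, abs_le]
  constructor <;> rintro ⟨h₁, h₂⟩ <;> refine ⟨by constructor <;> linarith [h₁.1, h₁.2], h₂⟩

lemma cubeQ_eq_preimage : cubeQ (m + 1) = cubeChart m ⁻¹' boxQ (Fin m → ℝ) := by
  ext x
  rw [cubeQ, mem_pi_ite_last_iff, mem_preimage, cubeChart_apply, boxQ, mem_prod,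
    mem_closedBall_zero_iff, pi_norm_le_iff_of_nonneg (by norm_num)]
  simp only [mem_Icc, Real.norm_eq_abs, abs_le]
  constructor <;> rintro ⟨h₁, h₂⟩ <;> refine ⟨by constructor <;> linarith [h₁.1, h₁.2], h₂⟩

lemma frontier_cubeW : frontier (cubeW (m + 1)) = cubeChart m ⁻¹' sphere 0 1 := by
  rw [cubeW_eq_preimage, ← Homeomorph.preimage_frontier, frontier_closedBall _ one_ne_zero]

lemma frontier_cubeW_subset : frontier (cubeW (m + 1)) ⊆ cubeW (m + 1) := by
  rw [frontier_cubeW, cubeW_eq_preimage]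
  exact preimage_mono sphere_subset_closedBall

lemma exists_lipschitzWith_cubeChart_symm : ∃ K, LipschitzWith K (cubeChart m).symm := by
  obtain ⟨K, hK⟩ : ∃ K, LipschitzWith K (splitLast m).symm := ⟨_, (splitLast m).symm.lipschitz⟩
  refine ⟨K, LipschitzWith.of_dist_le_mul fun u v => ?_⟩
  change dist ((splitLast m).symm u + _) ((splitLast m).symm v + _) ≤ _
  rw [dist_add_right]
  exact hK.dist_le_mul u v

lemma mem_sphereExt_of_one_lt_norm_cubeChart {w : EuclideanSpace ℝ (Fin (m + 1))}
    (hw : 1 < ‖cubeChart m w‖) : w ∈ sphereExt (frontier (cubeW (m + 1))) := by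
  set c := (splitLast m).symm (-1, 0)
  have hchart (x) : cubeChart m x = splitLast m (x - c) := rfl
  refine ⟨by simpa [frontier_cubeW] using hw.ne', not_isBounded_connectedComponentIn_of_ray
    (v := w - c) (fun h => by rw [hchart, h, map_zero, norm_zero] at hw; linarith) fun τ hτ => ?_⟩
  have : cubeChart m (w + τ • (w - c)) = (1 + τ) • cubeChart m w := by
    rw [hchart, hchart, ← map_smul, show w + τ • (w - c) - c = (1 + τ) • (w - c) by module]
  rw [frontier_cubeW, mem_preimage, this, mem_sphere_zero_iff_norm, norm_smul,
    Real.norm_of_nonneg (by linarith)]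
  nlinarith

theorem exists_homeomorph_pushOff_cubeW
    {F : EuclideanSpace ℝ (Fin (m + 1)) → EuclideanSpace ℝ (Fin (m + 1))}
    (hFfix : ∀ x ∈ frontier (cubeW (m + 1)) \ cubeP (m + 1), F x = x)
    (hFP : F '' cubeP (m + 1) ⊆ cubeQ (m + 1)) {ε : ℝ} (hε : 0 < ε) :
    ∃ ρ Ψ : EuclideanSpace ℝ (Fin (m + 1)) ≃ₜ EuclideanSpace ℝ (Fin (m + 1)),
      ρ '' frontier (cubeW (m + 1)) = frontier (cubeW (m + 1)) ∧
      ∀ x ∈ frontier (cubeW (m + 1)),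
        dist x (Ψ (F (ρ x))) ≤ ε ∧ 1 < ‖cubeChart m (Ψ (F (ρ x)))‖ := by
  obtain ⟨K, hK⟩ := exists_lipschitzWith_cubeChart_symm (m := m)
  have hsphere (u) : (cubeChart m).symm u ∈ frontier (cubeW (m + 1)) ↔ u ∈ sphere 0 1 := by
    rw [frontier_cubeW, mem_preimage, Homeomorph.apply_symm_apply]
  have hQ (u) : (cubeChart m).symm u ∈ cubeQ (m + 1) ↔ u ∈ boxQ (Fin m → ℝ) := by
    rw [cubeQ_eq_preimage, mem_preimage, Homeomorph.apply_symm_apply]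
  obtain ⟨ρ, Ψ, hρ, hΨ⟩ := exists_homeomorph_pushOff_sphere
    (f := cubeChart m ∘ F ∘ (cubeChart m).symm)
    (fun u ⟨hu, hq⟩ => by
      rw [Function.comp_apply, Function.comp_apply,
        hFfix _ ⟨(hsphere u).2 hu, fun hP => hq ((hQ u).1 hP.2)⟩, Homeomorph.apply_symm_apply])
    (fun u ⟨hu, hq⟩ => by
      rw [← hQ, Function.comp_apply, Function.comp_apply, Homeomorph.symm_apply_apply]
      exact hFP ⟨_, ⟨frontier_cubeW_subset ((hsphere u).2 hu), (hQ u).2 hq⟩, rfl⟩)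
    (δ := ε / (K + 1)) (by positivity)
  refine ⟨(cubeChart m).trans (ρ.trans (cubeChart m).symm),
    (cubeChart m).trans (Ψ.trans (cubeChart m).symm), ?_, fun x hx => ?_⟩
  · change ((cubeChart m).symm ∘ ρ ∘ cubeChart m) '' _ = _
    rw [image_comp, image_comp, frontier_cubeW, Homeomorph.image_preimage, hρ,
      Homeomorph.image_symm]
  rw [frontier_cubeW] at hx
  obtain ⟨hd, hn⟩ := hΨ _ hx
  simp only [Homeomorph.trans_apply, Homeomorph.apply_symm_apply, Function.comp_apply] at hd hn ⊢
  refine ⟨?_, hn⟩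
  calc dist x _ ≤ K * dist (cubeChart m x) _ := by
        simpa only [Homeomorph.symm_apply_apply] using hK.dist_le_mul (cubeChart m x) _
    _ ≤ K * (ε / (K + 1)) := by gcongr
    _ ≤ ε := by
        rw [mul_div_assoc', div_le_iff₀ (by positivity)]
        nlinarith [K.2]

end Cube

theorem stmt7 {N : ℕ} (hN : 4 ≤ N)
    (F : EuclideanSpace ℝ (Fin N) → EuclideanSpace ℝ (Fin N))
    (hFemb : Topology.IsEmbedding fun x : cubeW N => F x)
    (hFfix : ∀ x ∈ frontier (cubeW N) \ cubeP N, F x = x)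
    (hFP : F '' cubeP N ⊆ cubeQ N)
    (Sg : Set (EuclideanSpace ℝ (Fin N))) (hSg : Sg = F '' frontier (cubeW N))
    (ε : ℝ) (hε : 0 < ε) :
    ∃ ψ : frontier (cubeW N) → EuclideanSpace ℝ (Fin N), Topology.IsEmbedding ψ ∧
      (∀ x : frontier (cubeW N), dist (x : EuclideanSpace ℝ (Fin N)) (ψ x) ≤ ε) ∧
      Set.range ψ ⊆ sphereExt (frontier (cubeW N)) ∧
      AmbHomeo (Set.range ψ) Sg := by
  obtain ⟨m, rfl⟩ : ∃ m, N = m + 1 := ⟨N - 1, by omega⟩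
  obtain ⟨ρ, Ψ, hρ, hψ⟩ := exists_homeomorph_pushOff_cubeW hFfix hFP hε
  refine ⟨fun x => Ψ (F (ρ x)), ?_, fun x => (hψ x x.2).1, ?_,
    hSg ▸ ambHomeo_range_homeomorph_comp ρ Ψ hρ⟩
  · exact isEmbedding_homeomorph_comp_restrict ρ Ψ
      (fun x hx => frontier_cubeW_subset (hρ ▸ mem_image_of_mem ρ hx)) hFemb
  · rintro _ ⟨x, rfl⟩
    exact mem_sphereExt_of_one_lt_norm_cubeChart (hψ x x.2).2
end
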